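/- Let 2 ≤ k ≤ n be integers. There exists a constant θ = θ(n,k) > 0 such that for every λ = (λ_1,…,λ_n) in the closure of Γ_k with λ_1 ≥ λ_2 ≥ ⋯ ≥ λ_n, one has S_{k−1}(λ|k) ≥ θ λ_1 S_{k−2}(λ|1k). -/

import Mathlib

open Finset

/-- `S_m(λ)`: the `m`-th elementary symmetric polynomial of `λ ∈ ℝⁿ`
(`S_0 = 1`, and `S_m = 0` when `m > n`). -/
noncomputable def esymmS (n m : ℕ) (lam : Fin n → ℝ) : ℝ :=
  ∑ A ∈ Finset.univ.powersetCard m, ∏ j ∈ A, lam j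

/-- `S_m(λ|i)`: `S_m` applied to the vector obtained from `λ` by deleting the `i`-th entry. -/
noncomputable def esymmSdel (n m : ℕ) (lam : Fin n → ℝ) (i : Fin n) : ℝ :=
  ∑ A ∈ (Finset.univ.erase i).powersetCard m, ∏ j ∈ A, lam j

/-- `S_m(λ|ij)`: `S_m` applied to the vector obtained from `λ` by deleting the
`i`-th and `j`-th entries. -/
noncomputable def esymmSdel2 (n m : ℕ) (lam : Fin n → ℝ) (i j : Fin n) : ℝ :=
  ∑ A ∈ ((Finset.univ.erase i).erase j).powersetCard m, ∏ l ∈ A, lam l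

/-- The Gårding cone `Γ_k = {λ : S_m(λ) > 0 for all 1 ≤ m ≤ k}`. -/
def GammaCone (n k : ℕ) : Set (Fin n → ℝ) :=
  {lam | ∀ m, 1 ≤ m → m ≤ k → 0 < esymmS n m lam}

/-- The closure of the Gårding cone: `{λ : S_m(λ) ≥ 0 for all 1 ≤ m ≤ k}`. -/
def GammaConeBar (n k : ℕ) : Set (Fin n → ℝ) :=
  {lam | ∀ m, 1 ≤ m → m ≤ k → 0 ≤ esymmS n m lam}


variable {n : ℕ}

noncomputable def Esm (m : ℕ) (s : Finset (Fin n)) (x : Fin n → ℝ) : ℝ :=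
  ∑ A ∈ s.powersetCard m, ∏ i ∈ A, x i

lemma Esm_zero (s : Finset (Fin n)) (x : Fin n → ℝ) : Esm 0 s x = 1 := by
  simp [Esm]

lemma Esm_of_card_lt {m : ℕ} {s : Finset (Fin n)} (h : s.card < m) (x : Fin n → ℝ) :
    Esm m s x = 0 := by
  rw [Esm, Finset.powersetCard_eq_empty.2 h, sum_empty]

lemma Esm_one (s : Finset (Fin n)) (x : Fin n → ℝ) : Esm 1 s x = ∑ i ∈ s, x i := by
  rw [Esm, Finset.powersetCard_one, Finset.sum_map]
  simp

lemma Esm_succ {s : Finset (Fin n)} {i : Fin n} (hi : i ∈ s) (m : ℕ) (x : Fin n → ℝ) :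
    Esm (m+1) s x = x i * Esm m (s.erase i) x + Esm (m+1) (s.erase i) x := by
  classical
  rw [Esm, ← Finset.sum_filter_add_sum_filter_not _ (fun A => i ∈ A)]
  congr 1
  · rw [Esm, Finset.mul_sum]
    refine Finset.sum_bij' (fun A _ => A.erase i) (fun B _ => insert i B) ?hi ?hj ?left ?right ?h
    case hi =>
      intro A hA
      simp only [mem_filter, mem_powersetCard] at hA
      simp only [mem_powersetCard]
      refine ⟨Finset.erase_subset_erase i hA.1.1, ?_⟩
      rw [Finset.card_erase_of_mem hA.2, hA.1.2]
      omega
    case hj =>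
      intro B hB
      simp only [mem_powersetCard] at hB
      have hiB : i ∉ B := fun h => (Finset.notMem_erase i s) (hB.1 h)
      simp only [mem_filter, mem_powersetCard]
      refine ⟨⟨Finset.insert_subset hi (hB.1.trans (Finset.erase_subset i s)), ?_⟩,
        Finset.mem_insert_self i B⟩
      rw [Finset.card_insert_of_notMem hiB, hB.2]
    case left =>
      intro A hA
      simp only [mem_filter] at hA
      exact Finset.insert_erase hA.2
    case right =>
      intro B hB
      simp only [mem_powersetCard] at hB
      have hiB : i ∉ B := fun h => (Finset.notMem_erase i s) (hB.1 h)
      exact Finset.erase_insert hiB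
    case h =>
      intro A hA
      simp only [mem_filter] at hA
      exact (Finset.mul_prod_erase A x hA.2).symm
  · rw [Esm]
    apply Finset.sum_congr
    · ext A
      simp only [mem_filter, mem_powersetCard, Finset.subset_erase]
      tauto
    · intros; rfl

lemma Esm_smul (m : ℕ) (s : Finset (Fin n)) (x : Fin n → ℝ) (c : ℝ) :
    Esm m s (fun i => c * x i) = c ^ m * Esm m s x := by
  rw [Esm, Esm, Finset.mul_sum]
  apply Finset.sum_congr rfl
  intro A hA
  rw [Finset.prod_mul_distrib, Finset.prod_const, (Finset.mem_powersetCard.1 hA).2]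

lemma Esm_continuous (m : ℕ) (s : Finset (Fin n)) : Continuous fun x : Fin n → ℝ => Esm m s x := by
  apply continuous_finset_sum
  intro A _
  exact continuous_finset_prod _ fun i _ => continuous_apply i

lemma card_supersets {m : ℕ} {s B : Finset (Fin n)} (hBs : B ⊆ s) (hBm : B.card ≤ m) :
    ((s.powersetCard m).filter (fun A => B ⊆ A)).card = (s.card - B.card).choose (m - B.card) := by
  classical
  rw [← Finset.card_sdiff_of_subset hBs, ← Finset.card_powersetCard]
  apply Finset.card_bij' (fun A _ => A \ B) (fun C _ => C ∪ B)
  · intro A hA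
    simp only [mem_filter, mem_powersetCard] at hA ⊢
    refine ⟨Finset.sdiff_subset_sdiff hA.1.1 (le_refl _), ?_⟩
    rw [Finset.card_sdiff_of_subset hA.2, hA.1.2]
  · intro C hC
    simp only [mem_powersetCard] at hC
    have hdisj : Disjoint C B := Finset.disjoint_of_subset_left hC.1 (Finset.sdiff_disjoint)
    simp only [mem_filter, mem_powersetCard]
    refine ⟨⟨Finset.union_subset (hC.1.trans (Finset.sdiff_subset)) hBs, ?_⟩,
      Finset.subset_union_right⟩
    rw [Finset.card_union_of_disjoint hdisj, hC.2]
    have hcard : B.card ≤ s.card := Finset.card_le_card hBs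
    omega
  · intro A hA
    simp only [mem_filter] at hA
    exact Finset.sdiff_union_of_subset hA.2
  · intro C hC
    simp only [mem_powersetCard] at hC
    have hdisj : Disjoint C B := Finset.disjoint_of_subset_left hC.1 (Finset.sdiff_disjoint)
    exact Finset.union_sdiff_cancel_right hdisj

lemma Esm_shift (m : ℕ) (s : Finset (Fin n)) (x : Fin n → ℝ) (t : ℝ) :
    Esm m s (fun i => x i + t)
      = ∑ r ∈ Finset.range (m+1),
          (((s.card - r).choose (m - r) : ℕ) : ℝ) * Esm r s x * t^(m-r) := by
  classical
  have step1 : Esm m s (fun i => x i + t)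
      = ∑ A ∈ s.powersetCard m, ∑ B ∈ A.powerset, (∏ i ∈ B, x i) * t^(m - B.card) := by
    apply Finset.sum_congr rfl
    intro A hA
    rw [Finset.prod_add]
    apply Finset.sum_congr rfl
    intro B hB
    congr 1
    rw [Finset.prod_const, Finset.card_sdiff_of_subset (Finset.mem_powerset.1 hB),
      (Finset.mem_powersetCard.1 hA).2]
  rw [step1]
  rw [Finset.sum_comm' (t' := s.powerset.filter (fun B => B.card ≤ m))
    (s' := fun B => (s.powersetCard m).filter (fun A => B ⊆ A)) ?hcomm]
  case hcomm =>
    intro A B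
    simp only [mem_filter, mem_powersetCard, mem_powerset]
    constructor
    · rintro ⟨⟨hAs, hAm⟩, hBA⟩
      exact ⟨⟨⟨hAs, hAm⟩, hBA⟩, hBA.trans hAs, by rw [← hAm]; exact Finset.card_le_card hBA⟩
    · rintro ⟨⟨h1, h2⟩, -⟩
      exact ⟨h1, h2⟩
  have step2 : ∀ B ∈ s.powerset.filter (fun B => B.card ≤ m),
      ∑ _A ∈ (s.powersetCard m).filter (fun A => B ⊆ A), (∏ i ∈ B, x i) * t^(m - B.card)
      = (((s.card - B.card).choose (m - B.card) : ℕ) : ℝ) * ((∏ i ∈ B, x i) * t^(m - B.card)) := by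
    intro B hB
    simp only [mem_filter, mem_powerset] at hB
    rw [Finset.sum_const, card_supersets hB.1 hB.2, nsmul_eq_mul]
  rw [Finset.sum_congr rfl step2]
  have hmap : ∀ B ∈ s.powerset.filter (fun B => B.card ≤ m), B.card ∈ Finset.range (m+1) := by
    intro B hB
    simp only [mem_filter] at hB
    simp only [mem_range]
    omega
  rw [← Finset.sum_fiberwise_of_maps_to hmap]
  apply Finset.sum_congr rfl
  intro r hr
  simp only [mem_range] at hr
  have hsetr : (s.powerset.filter (fun B => B.card ≤ m)).filter (fun B => B.card = r)
      = s.powersetCard r := by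
    ext B
    simp only [mem_filter, mem_powerset, mem_powersetCard]
    constructor
    · rintro ⟨⟨h1, _⟩, h3⟩; exact ⟨h1, h3⟩
    · rintro ⟨h1, h2⟩; exact ⟨⟨h1, by omega⟩, h2⟩
  rw [hsetr, Esm, Finset.mul_sum, Finset.sum_mul]
  apply Finset.sum_congr rfl
  intro B hB
  have : B.card = r := (Finset.mem_powersetCard.1 hB).2
  rw [this]
  ring

open Filter in
lemma prod_shift_atTop {A : Finset (Fin n)} (hA : A.Nonempty) (x : Fin n → ℝ) :
    Tendsto (fun t : ℝ => ∏ i ∈ A, (x i + t)) atTop atTop := by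
  induction hA using Finset.Nonempty.cons_induction with
  | singleton a => simpa using tendsto_atTop_add_const_left atTop (x a) tendsto_id
  | cons a s ha hs ih =>
      simp only [Finset.prod_cons]
      exact (tendsto_atTop_add_const_left atTop (x a) tendsto_id).atTop_mul_atTop₀ ih

open Filter in
lemma sum_shift_atTop {ι : Type*} {u : Finset ι} (hu : u.Nonempty) (f : ι → ℝ → ℝ)
    (hf : ∀ a ∈ u, Tendsto (f a) atTop atTop) :
    Tendsto (fun t => ∑ a ∈ u, f a t) atTop atTop := by
  induction hu using Finset.Nonempty.cons_induction with
  | singleton a => simpa using hf a (by simp)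
  | cons a s ha hs ih =>
      simp only [Finset.sum_cons]
      exact Filter.Tendsto.atTop_add_atTop (hf a (Finset.mem_cons_self a s))
        (ih fun b hb => hf b (Finset.mem_cons.2 (Or.inr hb)))

open Filter in
lemma Esm_shift_atTop {m : ℕ} {s : Finset (Fin n)} (h1 : 1 ≤ m) (hms : m ≤ s.card)
    (x : Fin n → ℝ) :
    Tendsto (fun t : ℝ => Esm m s (fun i => x i + t)) atTop atTop := by
  have hne : (s.powersetCard m).Nonempty := by
    obtain ⟨A, hAs, hAc⟩ := Finset.exists_subset_card_eq hms
    exact ⟨A, Finset.mem_powersetCard.2 ⟨hAs, hAc⟩⟩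
  apply sum_shift_atTop hne
  intro A hA
  have hAc := (Finset.mem_powersetCard.1 hA).2
  have : A.Nonempty := Finset.card_pos.1 (by omega)
  exact prod_shift_atTop this x

lemma Esm_shift_cont (m : ℕ) (s : Finset (Fin n)) (x : Fin n → ℝ) :
    Continuous fun t : ℝ => Esm m s (fun i => x i + t) := by
  exact (Esm_continuous m s).comp (continuous_pi fun i => continuous_const.add continuous_id)

lemma Esm_shift_pos_of_closure {j : ℕ} {s : Finset (Fin n)} {x : Fin n → ℝ}
    (hx : ∀ m, 1 ≤ m → m ≤ j → 0 ≤ Esm m s x) {t : ℝ} (ht : 0 < t)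
    {m : ℕ} (h1 : 1 ≤ m) (hj : m ≤ j) (hcard : m ≤ s.card) :
    0 < Esm m s (fun i => x i + t) := by
  rw [Esm_shift]
  apply Finset.sum_pos'
  · intro r hr
    simp only [Finset.mem_range] at hr
    rcases Nat.eq_zero_or_pos r with h0 | hpos
    · subst h0
      rw [Esm_zero]
      positivity
    · have := hx r hpos (by omega)
      positivity
  · refine ⟨0, by simp, ?_⟩
    have hch : 0 < (s.card - 0).choose (m - 0) := Nat.choose_pos (by omega)
    have : (0:ℝ) < ((s.card - 0).choose (m - 0) : ℝ) := by exact_mod_cast hch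
    rw [Esm_zero]
    have h1' : (0:ℝ) < 1 := one_pos
    have := mul_pos (mul_pos this h1') (pow_pos ht (m - 0))
    simpa using this

lemma Esm_shift_pos_of_pos {j : ℕ} {s : Finset (Fin n)} {x : Fin n → ℝ}
    (hx : ∀ m, 1 ≤ m → m ≤ j → 0 < Esm m s x) {t : ℝ} (ht : 0 ≤ t)
    {m : ℕ} (h1 : 1 ≤ m) (hj : m ≤ j) :
    0 < Esm m s (fun i => x i + t) := by
  rw [Esm_shift]
  apply Finset.sum_pos'
  · intro r hr
    simp only [Finset.mem_range] at hr
    rcases Nat.eq_zero_or_pos r with h0 | hpos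
    · subst h0
      rw [Esm_zero]
      positivity
    · have := (hx r hpos (by omega)).le
      positivity
  · refine ⟨m, by simp, ?_⟩
    have := hx m h1 hj
    simp only [Nat.sub_self, Nat.choose_zero_right, pow_zero, Nat.cast_one, one_mul, mul_one]
    exact this

open Filter in
theorem garding_big (j : ℕ) : ∀ (c : ℕ) (s : Finset (Fin n)) (x : Fin n → ℝ), s.card = c →
    (((∀ m, 1 ≤ m → m ≤ j → 0 < Esm m s x) →
        ∀ i ∈ s, ∀ m, 1 ≤ m → m < j → 0 < Esm m (s.erase i) x)
    ∧ ((∀ m, 1 ≤ m → m ≤ j → 0 ≤ Esm m s x) →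
        ∀ i ∈ s, ∀ m, 1 ≤ m → m < j → 0 ≤ Esm m (s.erase i) x)
    ∧ (∀ p, p < j → (∀ m, 1 ≤ m → m ≤ p → 0 ≤ Esm m s x) →
        Esm p s x = 0 → 0 < Esm (p+1) s x → False)) := by
  induction j using Nat.strong_induction_on with
  | _ j ihj =>
  intro c
  induction c using Nat.strong_induction_on with
  | _ c ihc =>
  -- Part 1 : OA
  have hOA : ∀ (s : Finset (Fin n)) (x : Fin n → ℝ), s.card = c →
      (∀ m, 1 ≤ m → m ≤ j → 0 < Esm m s x) →
      ∀ i ∈ s, ∀ m, 1 ≤ m → m < j → 0 < Esm m (s.erase i) x := by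
    intro s x hcard hx i hi m h1m hmj
    rcases lt_or_eq_of_le (Nat.succ_le_of_lt hmj) with hmj' | hmj'
    · -- m < j - 1 : use OA at level j-1
      have hj1 : j - 1 < j := by omega
      exact (ihj (j-1) hj1 c s x hcard).1 (fun m' h1' h2' => hx m' h1' (by omega)) i hi m h1m
        (by omega)
    · -- m = j - 1, i.e. j = m + 1
      obtain rfl : j = m + 1 := by omega
      by_contra hneg
      push_neg at hneg
      set F : ℝ → ℝ := fun t => Esm m (s.erase i) (fun i' => x i' + t) with hF
      have hF0 : F 0 ≤ 0 := by
        have : F 0 = Esm m (s.erase i) x := by simp only [hF, add_zero]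
        rw [this]; exact hneg
      have hjcard : m + 1 ≤ s.card := by
        by_contra hlt
        have hEz := Esm_of_card_lt (show s.card < m + 1 by omega) x
        have hpos := hx (m+1) (by omega) (le_refl _)
        rw [hEz] at hpos
        exact lt_irrefl 0 hpos
      have hec : (s.erase i).card = s.card - 1 := Finset.card_erase_of_mem hi
      have htt : Tendsto F atTop atTop := Esm_shift_atTop h1m (by omega) x
      obtain ⟨T, hFT, hT0⟩ := ((htt.eventually_gt_atTop 0).and (eventually_ge_atTop 0)).exists
      have hcont : Continuous F := Esm_shift_cont m (s.erase i) x
      have hIcc : (0:ℝ) ∈ Set.Icc (F 0) (F T) := ⟨hF0, hFT.le⟩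
      obtain ⟨t₀, ht₀mem, ht₀⟩ := intermediate_value_Icc hT0 hcont.continuousOn hIcc
      have ht₀0 : 0 ≤ t₀ := ht₀mem.1
      set μ : Fin n → ℝ := fun i' => x i' + t₀ with hμdef
      have hμ : ∀ m', 1 ≤ m' → m' ≤ m + 1 → 0 < Esm m' s μ :=
        fun m' h1' h2' => Esm_shift_pos_of_pos hx ht₀0 h1' h2'
      have hE0 : Esm m (s.erase i) μ = 0 := ht₀
      have hEj : 0 < Esm (m+1) (s.erase i) μ := by
        have hid := Esm_succ hi m μ
        have := hμ (m+1) (by omega) (le_refl _)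
        rw [hid, hE0, mul_zero, zero_add] at this
        exact this
      have hEm' : ∀ m', 1 ≤ m' → m' ≤ m → 0 ≤ Esm m' (s.erase i) μ := by
        intro m' h1' h2'
        rcases lt_or_eq_of_le h2' with hlt | heq
        · exact ((ihj m (by omega) c s μ hcard).1
            (fun q hq1 hq2 => hμ q hq1 (by omega)) i hi m' h1' hlt).le
        · rw [heq, hE0]
      have hc1 : 1 ≤ c := by rw [← hcard]; exact Finset.card_pos.2 ⟨i, hi⟩
      have hcerase : (s.erase i).card = c - 1 := by rw [hec, hcard]
      exact (ihc (c-1) (by omega) (s.erase i) μ hcerase).2.2 m (by omega) hEm' hE0 hEj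
  intro s x hcard
  -- Part 2 : Abar
  have hAbarStep : (∀ m, 1 ≤ m → m ≤ j → 0 ≤ Esm m s x) →
      ∀ i ∈ s, ∀ m, 1 ≤ m → m < j → 0 ≤ Esm m (s.erase i) x := by
    intro hx i hi m h1m hmj
    by_cases hcd : (s.erase i).card < m
    · rw [Esm_of_card_lt hcd x]
    · push_neg at hcd
      have hec : (s.erase i).card = s.card - 1 := Finset.card_erase_of_mem hi
      have hc1 : 1 ≤ c := by rw [← hcard]; exact Finset.card_pos.2 ⟨i, hi⟩
      have hmc : m < c := by omega
      set J : ℕ := min j c with hJ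
      have key : ∀ t : ℝ, 0 < t → 0 < Esm m (s.erase i) (fun i' => x i' + t) := by
        intro t ht
        have hstrict : ∀ m', 1 ≤ m' → m' ≤ J → 0 < Esm m' s (fun i' => x i' + t) :=
          fun m' h1' h2' =>
            Esm_shift_pos_of_closure hx ht h1' (le_trans h2' (min_le_left _ _))
              (by rw [hcard]; exact le_trans h2' (min_le_right _ _))
        have hmJ : m < J := lt_min hmj hmc
        rcases lt_or_eq_of_le (min_le_left j c : J ≤ j) with hJj | hJj
        · exact (ihj J hJj c s (fun i' => x i' + t) hcard).1 hstrict i hi m h1m hmJ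
        · have hJeq : J = j := hJ.trans hJj
          rw [hJeq] at hstrict hmJ
          exact hOA s (fun i' => x i' + t) hcard hstrict i hi m h1m hmJ
      set F : ℝ → ℝ := fun t => Esm m (s.erase i) (fun i' => x i' + t) with hF
      have hcont : Continuous F := Esm_shift_cont m (s.erase i) x
      have hF0 : F 0 = Esm m (s.erase i) x := by simp only [hF, add_zero]
      have hlim : Tendsto F (nhdsWithin 0 (Set.Ioi 0)) (nhds (Esm m (s.erase i) x)) := by
        rw [← hF0]
        exact (hcont.tendsto 0).mono_left nhdsWithin_le_nhds
      refine ge_of_tendsto hlim ?_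
      filter_upwards [self_mem_nhdsWithin] with t ht
      exact (key t ht).le
  refine ⟨hOA s x hcard, hAbarStep, ?_⟩
  -- Part 3 : cascade
  intro p hpj hx h0 h1
  rcases Nat.eq_zero_or_pos p with hp0 | hp1
  · subst hp0
    rw [Esm_zero] at h0
    exact one_ne_zero h0
  obtain ⟨q, rfl⟩ : ∃ q, p = q + 1 := ⟨p - 1, by omega⟩
  have hsne : s.Nonempty := by
    by_contra hne
    rw [Finset.not_nonempty_iff_eq_empty] at hne
    subst hne
    rw [Esm_of_card_lt (by simp only [Finset.card_empty]; omega) x] at h1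
    exact lt_irrefl 0 h1
  obtain ⟨l, hls, hlmax⟩ := Finset.exists_max_image s x hsne
  by_cases hxl : x l ≤ 0
  · -- all entries ≤ 0 on s, sum ≥ 0 forces all zero
    have hsum : 0 ≤ ∑ i ∈ s, x i := by
      have := hx 1 (le_refl _) (by omega)
      rwa [Esm_one] at this
    have hnonpos : ∀ i ∈ s, x i ≤ 0 := fun i hi => (hlmax i hi).trans hxl
    have hall : ∀ i ∈ s, x i = 0 := by
      intro i hi
      have := Finset.sum_nonpos hnonpos
      have heq : ∑ i ∈ s, x i = 0 := le_antisymm this hsum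
      exact (Finset.sum_eq_zero_iff_of_nonpos hnonpos).1 heq i hi
    have hzero : Esm (q+1+1) s x = 0 := by
      rw [Esm]
      apply Finset.sum_eq_zero
      intro A hA
      obtain ⟨hAs, hAc⟩ := Finset.mem_powersetCard.1 hA
      obtain ⟨a, ha⟩ := Finset.card_pos.1 (show 0 < A.card by omega)
      exact Finset.prod_eq_zero ha (hall a (hAs ha))
    rw [hzero] at h1
    exact lt_irrefl 0 h1
  push_neg at hxl
  have hxbar : ∀ m, 1 ≤ m → m ≤ q + 2 → 0 ≤ Esm m s x := by
    intro m h1' h2'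
    rcases Nat.lt_or_ge m (q+2) with hlt | hge
    · exact hx m h1' (by omega)
    · have hmq : m = q + 2 := by omega
      rw [hmq]; exact h1.le
  have hAbar : ∀ m', 1 ≤ m' → m' < q + 2 → 0 ≤ Esm m' (s.erase l) x := by
    intro m' h1' h2'
    rcases lt_or_eq_of_le (Nat.succ_le_of_lt hpj) with hpj' | hpj'
    · exact (ihj (q+2) (by omega) c s x hcard).2.1 hxbar l hls m' h1' h2'
    · exact hAbarStep (fun m h1'' h2'' => hxbar m h1'' (by omega)) l hls m' h1' (by omega)
  have hq0 : 0 ≤ Esm q (s.erase l) x := by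
    rcases Nat.eq_zero_or_pos q with h | h
    · subst h; rw [Esm_zero]; norm_num
    · exact hAbar q h (by omega)
  have hq1 : 0 ≤ Esm (q+1) (s.erase l) x := hAbar (q+1) (by omega) (by omega)
  have hid1 : Esm (q+1) s x = x l * Esm q (s.erase l) x + Esm (q+1) (s.erase l) x :=
    Esm_succ hls q x
  rw [h0] at hid1
  have hEq : Esm q (s.erase l) x = 0 := by nlinarith
  have hEq1 : Esm (q+1) (s.erase l) x = 0 := by nlinarith
  rcases Nat.eq_zero_or_pos q with hq | hq
  · subst hq
    rw [Esm_zero] at hEq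
    exact one_ne_zero hEq
  have hid2 : Esm (q+1+1) s x = x l * Esm (q+1) (s.erase l) x + Esm (q+1+1) (s.erase l) x :=
    Esm_succ hls (q+1) x
  rw [hEq1, mul_zero, zero_add] at hid2
  rw [hid2] at h1
  have hc1 : 1 ≤ c := by rw [← hcard]; exact Finset.card_pos.2 ⟨l, hls⟩
  have hcerase : (s.erase l).card = c - 1 := by rw [Finset.card_erase_of_mem hls, hcard]
  exact (ihc (c-1) (by omega) (s.erase l) x hcerase).2.2 (q+1) (by omega)
    (fun m h1' h2' => hAbar m h1' (by omega)) hEq1 h1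

lemma Esm_erase_nonneg {j : ℕ} {s : Finset (Fin n)} {x : Fin n → ℝ}
    (hx : ∀ m, 1 ≤ m → m ≤ j → 0 ≤ Esm m s x) {i : Fin n} (hi : i ∈ s)
    {m : ℕ} (h1 : 1 ≤ m) (hm : m < j) : 0 ≤ Esm m (s.erase i) x :=
  (garding_big j s.card s x rfl).2.1 hx i hi m h1 hm

lemma descent (j : ℕ) : ∀ (s : Finset (Fin n)) (x : Fin n → ℝ) (T : Finset (Fin n)),
    T ⊆ s → T.card = j → (∀ i ∈ T, 1 ≤ x i) →
    (∀ m, 1 ≤ m → m ≤ j → 0 ≤ Esm m s x) →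
    (∃ cc : ℝ, 0 ≤ cc ∧ 0 ≤ Esm (j+1) s x + cc * Esm j s x) →
    0 < Esm j s x := by
  induction j with
  | zero =>
      intro s x T _ _ _ _ _
      rw [Esm_zero]
      norm_num
  | succ q ih =>
      intro s x T hTs hTc hT1 hx hb
      have hEq : 0 ≤ Esm (q+1) s x := hx (q+1) (by omega) (le_refl _)
      rcases eq_or_lt_of_le hEq with h0 | hpos
      · exfalso
        obtain ⟨cc, hcc0, hccb⟩ := hb
        have hEq2 : 0 ≤ Esm (q+1+1) s x := by nlinarith
        obtain ⟨t₀, ht₀⟩ : T.Nonempty := Finset.card_pos.1 (by omega)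
        have hsne : s.Nonempty := ⟨t₀, hTs ht₀⟩
        obtain ⟨l, hls, hlmax⟩ := Finset.exists_max_image s x hsne
        have hxl : 1 ≤ x l := le_trans (hT1 t₀ ht₀) (hlmax t₀ (hTs ht₀))
        have hxbar : ∀ m, 1 ≤ m → m ≤ q + 2 → 0 ≤ Esm m s x := by
          intro m h1' h2'
          rcases Nat.lt_or_ge m (q+2) with hlt | hge
          · exact hx m h1' (by omega)
          · have hmq : m = q + 2 := by omega
            rw [hmq]; exact hEq2
        have hAbar : ∀ m, 1 ≤ m → m < q + 2 → 0 ≤ Esm m (s.erase l) x :=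
          fun m h1' h2' => Esm_erase_nonneg hxbar hls h1' h2'
        have hid : Esm (q+1) s x = x l * Esm q (s.erase l) x + Esm (q+1) (s.erase l) x :=
          Esm_succ hls q x
        have hq0 : 0 ≤ Esm q (s.erase l) x := by
          rcases Nat.eq_zero_or_pos q with h | h
          · subst h; rw [Esm_zero]; norm_num
          · exact hAbar q h (by omega)
        have hq1 : 0 ≤ Esm (q+1) (s.erase l) x := hAbar (q+1) (by omega) (by omega)
        have hEq' : Esm q (s.erase l) x = 0 := by nlinarith
        have hEq1' : Esm (q+1) (s.erase l) x = 0 := by nlinarith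
        rcases Nat.eq_zero_or_pos q with hqz | hqpos
        · subst hqz
          rw [Esm_zero] at hEq'
          exact one_ne_zero hEq'
        -- build T' of size q inside s.erase l
        obtain ⟨T', hT's, hT'c, hT'1⟩ :
            ∃ T' : Finset (Fin n), T' ⊆ s.erase l ∧ T'.card = q ∧ ∀ i ∈ T', 1 ≤ x i := by
          by_cases hlT : l ∈ T
          · refine ⟨T.erase l, Finset.erase_subset_erase l hTs, ?_, ?_⟩
            · rw [Finset.card_erase_of_mem hlT, hTc]
              omega
            · intro i hi
              exact hT1 i (Finset.erase_subset l T hi)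
          · refine ⟨T.erase t₀, ?_, ?_, ?_⟩
            · intro a ha
              have haT : a ∈ T := Finset.erase_subset t₀ T ha
              refine Finset.mem_erase.2 ⟨?_, hTs haT⟩
              intro hal
              exact hlT (hal ▸ haT)
            · rw [Finset.card_erase_of_mem ht₀, hTc]
              omega
            · intro i hi
              exact hT1 i (Finset.erase_subset t₀ T hi)
        have := ih (s.erase l) x T' hT's hT'c hT'1
          (fun m h1' h2' => hAbar m h1' (by omega))
          ⟨0, le_refl 0, by rw [hEq1', hEq', mul_zero, add_zero]⟩
        rw [hEq'] at this
        exact lt_irrefl 0 this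
      · exact hpos

lemma gbar_filter {k : ℕ} {x : Fin n → ℝ}
    (hx : ∀ m, 1 ≤ m → m ≤ k → 0 ≤ Esm m Finset.univ x) :
    ∀ r, r ≤ k - 1 → r < n → ∀ m, 1 ≤ m → m ≤ k - r →
      0 ≤ Esm m (Finset.univ.filter fun i : Fin n => r ≤ i.val) x := by
  intro r
  induction r with
  | zero =>
      intro _ _ m h1 h2
      have hset : (Finset.univ.filter fun i : Fin n => 0 ≤ i.val) = Finset.univ := by
        apply Finset.filter_true_of_mem
        intro i _
        omega
      rw [hset]
      exact hx m h1 (by omega)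
  | succ r ih =>
      intro hr hrn' m h1 h2
      have hrn : r < n := by omega
      have hset : (Finset.univ.filter fun i : Fin n => r + 1 ≤ i.val)
          = (Finset.univ.filter fun i : Fin n => r ≤ i.val).erase ⟨r, hrn⟩ := by
        ext i
        simp only [Finset.mem_erase, Finset.mem_filter, Finset.mem_univ, true_and]
        constructor
        · intro h
          refine ⟨fun he => ?_, by omega⟩
          rw [he] at h
          simp only [] at h
          omega
        · rintro ⟨hne, hge⟩
          have : i.val ≠ r := fun hv => hne (Fin.ext hv)
          omega
      rw [hset]
      exact Esm_erase_nonneg (j := k - r) (ih (by omega) hrn)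
        (Finset.mem_filter.2 ⟨Finset.mem_univ _, le_refl r⟩) h1 (by omega)

/-- For `2 ≤ k ≤ n` there is `θ = θ(n,k) > 0` such that for every `lam` in the
closure of `Γ_k` with decreasing entries, `S_{k−1}(lam|k) ≥ θ · lam_1 · S_{k−2}(lam|1k)`
(indices are 1-based: `lam_1` is the largest entry, and `lam|1k` deletes the first and
`k`-th entries). -/
theorem esymmSdel_lower_bound (n k : ℕ) (hk2 : 2 ≤ k) (hkn : k ≤ n) :
    ∃ θ : ℝ, 0 < θ ∧
      ∀ lam : Fin n → ℝ, lam ∈ GammaConeBar n k → Antitone lam →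
        esymmSdel n (k - 1) lam ⟨k - 1, by omega⟩ ≥
          θ * lam ⟨0, by omega⟩ *
            esymmSdel2 n (k - 2) lam ⟨0, by omega⟩ ⟨k - 1, by omega⟩ := by
  obtain ⟨K, rfl⟩ : ∃ K, k = K + 2 := ⟨k - 2, by omega⟩
  have hn2 : 2 ≤ n := le_trans hk2 hkn
  set i0 : Fin n := ⟨0, by omega⟩ with hi0def
  set ik : Fin n := ⟨K + 1, by omega⟩ with hikdef
  have hi0ik : i0 ≠ ik := by
    intro h
    have := congrArg Fin.val h
    simp [hi0def, hikdef] at this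
  have hi0le : ∀ i : Fin n, i0 ≤ i := fun i => by
    simp only [Fin.le_def, hi0def]
    omega
  -- the set u deleted twice
  set u : Finset (Fin n) := (Finset.univ.erase i0).erase ik with hudef
  have hu_comm : (Finset.univ.erase ik).erase i0 = u := by
    rw [hudef, Finset.erase_right_comm]
  -- basic membership facts
  have hi0mem : i0 ∈ Finset.univ.erase ik := Finset.mem_erase.2 ⟨hi0ik, Finset.mem_univ _⟩
  have hikmem : ik ∈ Finset.univ.erase i0 := Finset.mem_erase.2 ⟨fun h => hi0ik h.symm, Finset.mem_univ _⟩
  classical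
  -- The normalized compact set
  set Λ : Set (Fin n → ℝ) := {y | Antitone y ∧ (∀ m, 1 ≤ m → m ≤ K + 2 → 0 ≤ Esm m Finset.univ y)
      ∧ y ik = 1 ∧ y i0 ≤ 2} with hΛdef
  set f : (Fin n → ℝ) → ℝ := fun y => Esm (K + 1) (Finset.univ.erase ik) y with hfdef
  set h : (Fin n → ℝ) → ℝ := fun y => y i0 * Esm K u y with hhdef
  have hfcont : Continuous f := Esm_continuous _ _
  have hhcont : Continuous h := (continuous_apply i0).mul (Esm_continuous _ _)
  -- general facts for any admissible lam
  have hkey : ∀ lam : Fin n → ℝ, (∀ m, 1 ≤ m → m ≤ K + 2 → 0 ≤ Esm m Finset.univ lam) →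
      Antitone lam →
      (Esm (K+1) (Finset.univ.erase ik) lam
          = Esm (K+1) (Finset.univ.erase i0) lam + (lam i0 - lam ik) * Esm K u lam)
        ∧ 0 ≤ Esm (K+1) (Finset.univ.erase i0) lam
        ∧ 0 ≤ Esm K u lam
        ∧ 0 ≤ lam i0 := by
    intro lam hlam hanti
    have hid1 : Esm (K+1+1) Finset.univ lam
        = lam i0 * Esm (K+1) (Finset.univ.erase i0) lam
          + Esm (K+1+1) (Finset.univ.erase i0) lam := Esm_succ (Finset.mem_univ i0) (K+1) lam
    have hidW : Esm (K+1) (Finset.univ.erase ik) lam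
        = lam i0 * Esm K u lam + Esm (K+1) u lam := by
      have := Esm_succ hi0mem K lam
      rwa [hu_comm] at this
    have hidS : Esm (K+1) (Finset.univ.erase i0) lam
        = lam ik * Esm K u lam + Esm (K+1) u lam := Esm_succ hikmem K lam
    have hSA : 0 ≤ Esm (K+1) (Finset.univ.erase i0) lam :=
      Esm_erase_nonneg (j := K+2) hlam (Finset.mem_univ _) (by omega) (by omega)
    have hx' : ∀ m, 1 ≤ m → m ≤ K + 1 → 0 ≤ Esm m (Finset.univ.erase i0) lam :=
      fun m h1 h2 => Esm_erase_nonneg (j := K+2) hlam (Finset.mem_univ _) h1 (by omega)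
    have hg : 0 ≤ Esm K u lam := by
      rcases Nat.eq_zero_or_pos K with hK | hK
      · subst hK; rw [Esm_zero]; norm_num
      · exact Esm_erase_nonneg (j := K+1) hx' hikmem hK (by omega)
    have hx0 : 0 ≤ lam i0 := by
      by_contra hneg
      push_neg at hneg
      have hsum : 0 ≤ ∑ i ∈ Finset.univ, lam i := by
        have := hlam 1 (le_refl _) (by omega)
        rwa [Esm_one] at this
      have hle : ∑ i ∈ Finset.univ, lam i ≤ (Finset.univ : Finset (Fin n)).card • lam i0 :=
        Finset.sum_le_card_nsmul _ _ _ (fun i _ => hanti (hi0le i))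
      rw [Finset.card_univ, Fintype.card_fin] at hle
      have : (n : ℝ) * lam i0 < 0 := by
        apply mul_neg_of_pos_of_neg _ hneg
        have : 0 < n := by omega
        exact_mod_cast this
      rw [nsmul_eq_mul] at hle
      linarith
    exact ⟨by rw [hidW, hidS]; ring, hSA, hg, hx0⟩
  -- positivity of f on Λ
  have hfpos : ∀ y ∈ Λ, 0 < f y := by
    rintro y ⟨hanti, hybar, hyik, hyi0⟩
    apply descent (K+1) (Finset.univ.erase ik) y
      ((Finset.range (K+1)).attachFin (fun m hm => by
        simp only [Finset.mem_range] at hm; omega))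
    · intro i hi
      rw [Finset.mem_attachFin, Finset.mem_range] at hi
      refine Finset.mem_erase.2 ⟨?_, Finset.mem_univ _⟩
      intro he
      rw [he] at hi
      simp only [hikdef] at hi
      omega
    · rw [Finset.card_attachFin, Finset.card_range]
    · intro i hi
      rw [Finset.mem_attachFin, Finset.mem_range] at hi
      have hle : i ≤ ik := by
        simp only [Fin.le_def, hikdef]
        omega
      calc (1:ℝ) = y ik := hyik.symm
        _ ≤ y i := hanti hle
    · exact fun m h1 h2 => Esm_erase_nonneg (j := K+2) hybar (Finset.mem_univ _) h1 (by omega)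
    · refine ⟨1, zero_le_one, ?_⟩
      have hid : Esm (K+1+1) Finset.univ y
          = y ik * Esm (K+1) (Finset.univ.erase ik) y
            + Esm (K+1+1) (Finset.univ.erase ik) y := Esm_succ (Finset.mem_univ ik) (K+1) y
      have h2 := hybar (K+2) (by omega) (le_refl _)
      rw [hid, hyik, one_mul] at h2
      linarith
  -- boundedness of Λ
  have hbound : ∀ y ∈ Λ, ∀ i, y i ∈ Set.Icc (-(n:ℝ)) 2 := by
    rintro y ⟨hanti, hybar, hyik, hyi0⟩ i
    constructor
    · -- lower bound
      rcases Nat.lt_or_ge i.val (K+1) with hiv | hiv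
      · have : y ik ≤ y i := hanti (by simp only [Fin.le_def, hikdef]; omega)
        rw [hyik] at this
        have hn0 : (0:ℝ) ≤ n := by positivity
        linarith
      · -- i in the tail
        set D : Finset (Fin n) := Finset.univ.filter (fun j : Fin n => K + 1 ≤ j.val) with hD
        have hiD : i ∈ D := Finset.mem_filter.2 ⟨Finset.mem_univ _, hiv⟩
        have hDsum : 0 ≤ ∑ j ∈ D, y j := by
          have := gbar_filter (k := K+2) hybar (K+1) (by omega) (by omega) 1 (le_refl _) (by omega)
          rwa [Esm_one] at this
        have hsplit : ∑ j ∈ D, y j = y i + ∑ j ∈ D.erase i, y j :=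
          (Finset.add_sum_erase D y hiD).symm
        have htail : ∑ j ∈ D.erase i, y j ≤ (D.erase i).card • (1:ℝ) := by
          apply Finset.sum_le_card_nsmul
          intro j hj
          have hjD := Finset.mem_of_mem_erase hj
          have hjv : K + 1 ≤ j.val := (Finset.mem_filter.1 hjD).2
          have : y j ≤ y ik := hanti (by simp only [Fin.le_def, hikdef]; omega)
          rw [hyik] at this
          exact this
        have hcard : ((D.erase i).card : ℝ) ≤ n := by
          have := Finset.card_le_univ (D.erase i)
          rw [Fintype.card_fin] at this
          exact_mod_cast this
        rw [nsmul_eq_mul, mul_one] at htail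
        linarith
    · calc y i ≤ y i0 := hanti (hi0le i)
        _ ≤ 2 := hyi0
  -- compactness of Λ
  have hclosed : IsClosed Λ := by
    have h1 : IsClosed {y : Fin n → ℝ | Antitone y} := by
      have : {y : Fin n → ℝ | Antitone y} =
          ⋂ (p : Fin n × Fin n) (_ : p.1 ≤ p.2), {y : Fin n → ℝ | y p.2 ≤ y p.1} := by
        ext y
        simp only [Set.mem_setOf_eq, Set.mem_iInter]
        exact ⟨fun hy p hp => hy hp, fun hy a b hab => hy (a, b) hab⟩
      rw [this]
      exact isClosed_iInter fun p => isClosed_iInter fun _ =>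
        isClosed_le (continuous_apply p.2) (continuous_apply p.1)
    have h2 : IsClosed {y : Fin n → ℝ | ∀ m, 1 ≤ m → m ≤ K + 2 → 0 ≤ Esm m Finset.univ y} := by
      have : {y : Fin n → ℝ | ∀ m, 1 ≤ m → m ≤ K + 2 → 0 ≤ Esm m Finset.univ y} =
          ⋂ (m : ℕ) (_ : 1 ≤ m) (_ : m ≤ K + 2), {y : Fin n → ℝ | 0 ≤ Esm m Finset.univ y} := by
        ext y
        simp only [Set.mem_setOf_eq, Set.mem_iInter]
      rw [this]
      exact isClosed_iInter fun m => isClosed_iInter fun _ => isClosed_iInter fun _ =>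
        isClosed_le continuous_const (Esm_continuous _ _)
    have h3 : IsClosed {y : Fin n → ℝ | y ik = 1} :=
      isClosed_eq (continuous_apply ik) continuous_const
    have h4 : IsClosed {y : Fin n → ℝ | y i0 ≤ 2} :=
      isClosed_le (continuous_apply i0) continuous_const
    exact h1.inter (h2.inter (h3.inter h4))
  have hcompact : IsCompact Λ := by
    apply IsCompact.of_isClosed_subset (isCompact_univ_pi (fun _ => isCompact_Icc)) hclosed
    intro y hy
    rw [Set.mem_univ_pi]
    exact hbound y hy
  by_cases hΛne : Λ.Nonempty
  · obtain ⟨ymin, hyminΛ, hymin⟩ := hcompact.exists_isMinOn hΛne hfcont.continuousOn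
    obtain ⟨ymax, hymaxΛ, hymax⟩ := hcompact.exists_isMaxOn hΛne hhcont.continuousOn
    set c₀ : ℝ := f ymin with hc₀def
    have hc₀ : 0 < c₀ := hfpos ymin hyminΛ
    set G : ℝ := h ymax with hGdef
    have hG : 0 ≤ G := by
      have h1 : h ymin ≤ G := hymax hyminΛ
      have h2 : 0 ≤ h ymin := by
        obtain ⟨hanti, hybar, hyik, hyi0⟩ := hyminΛ
        have hkey' := hkey ymin hybar hanti
        exact mul_nonneg hkey'.2.2.2 hkey'.2.2.1
      linarith
    refine ⟨min (1/2) (c₀ / (G + 1)), by positivity, ?_⟩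
    intro lam hlam hanti
    set θ : ℝ := min (1/2) (c₀ / (G + 1)) with hθdef
    have hθ2 : θ ≤ 1/2 := min_le_left _ _
    have hθG : θ ≤ c₀ / (G+1) := min_le_right _ _
    have hθ0 : 0 < θ := by positivity
    have hlam' : ∀ m, 1 ≤ m → m ≤ K + 2 → 0 ≤ Esm m Finset.univ lam := hlam
    obtain ⟨hWid, hSA, hg, hx0⟩ := hkey lam hlam' hanti
    rw [ge_iff_le]
    show θ * lam i0 * Esm K u lam ≤ Esm (K+1) (Finset.univ.erase ik) lam
    rcases le_or_gt (lam ik) (lam i0 / 2) with hsplit | hsplit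
    · -- easy case
      nlinarith [mul_nonneg hx0 hg, mul_nonneg (mul_nonneg hθ0.le hx0) hg,
        mul_nonneg (sub_nonneg.2 hsplit) hg]
    · -- scaling case
      have hik0 : 0 < lam ik := by linarith
      set a : ℝ := lam ik with hadef
      set y : Fin n → ℝ := fun i => a⁻¹ * lam i with hydef
      have hyΛ : y ∈ Λ := by
        refine ⟨?_, ?_, ?_, ?_⟩
        · intro p q hpq
          exact mul_le_mul_of_nonneg_left (hanti hpq) (inv_nonneg.2 hik0.le)
        · intro m h1 h2
          rw [hydef]
          rw [Esm_smul]
          exact mul_nonneg (by positivity) (hlam' m h1 h2)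
        · rw [hydef]
          exact inv_mul_cancel₀ hik0.ne'
        · rw [hydef]
          simp only []
          rw [inv_mul_le_iff₀ hik0]
          linarith
      have hfy : c₀ ≤ f y := hymin hyΛ
      have hhy : h y ≤ G := hymax hyΛ
      have hfy' : f y = a⁻¹ ^ (K+1) * Esm (K+1) (Finset.univ.erase ik) lam := by
        rw [hfdef, hydef]
        exact Esm_smul (K+1) _ lam a⁻¹
      have hhy' : h y = a⁻¹ ^ (K+1) * (lam i0 * Esm K u lam) := by
        rw [hhdef, hydef]
        simp only []
        rw [Esm_smul]
        ring
      have hapow : 0 < a ^ (K+1) := pow_pos hik0 _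
      have hainv : a⁻¹ ^ (K+1) * a ^ (K+1) = 1 := by
        rw [← mul_pow, inv_mul_cancel₀ hik0.ne', one_pow]
      -- W ≥ c₀ * a^(K+1)
      have hW : c₀ * a ^ (K+1) ≤ Esm (K+1) (Finset.univ.erase ik) lam := by
        have := mul_le_mul_of_nonneg_right hfy hapow.le
        rw [hfy'] at this
        calc c₀ * a ^ (K+1) ≤ a⁻¹ ^ (K+1) * Esm (K+1) (Finset.univ.erase ik) lam * a ^ (K+1) :=
              this
          _ = (a⁻¹ ^ (K+1) * a ^ (K+1)) * Esm (K+1) (Finset.univ.erase ik) lam := by ring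
          _ = Esm (K+1) (Finset.univ.erase ik) lam := by rw [hainv, one_mul]
      -- lam i0 * g ≤ G * a^(K+1)
      have hgbound : lam i0 * Esm K u lam ≤ G * a ^ (K+1) := by
        have := mul_le_mul_of_nonneg_right hhy hapow.le
        rw [hhy'] at this
        calc lam i0 * Esm K u lam
            = (a⁻¹ ^ (K+1) * a ^ (K+1)) * (lam i0 * Esm K u lam) := by rw [hainv, one_mul]
          _ = a⁻¹ ^ (K+1) * (lam i0 * Esm K u lam) * a ^ (K+1) := by ring
          _ ≤ G * a ^ (K+1) := this
      have hGnn : 0 ≤ G * a ^ (K+1) := mul_nonneg hG hapow.le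
      have hstep1 : θ * (lam i0 * Esm K u lam) ≤ θ * (G * a ^ (K+1)) :=
        mul_le_mul_of_nonneg_left hgbound hθ0.le
      have hstep2 : θ * (G * a ^ (K+1)) ≤ (c₀ / (G+1)) * (G * a ^ (K+1)) :=
        mul_le_mul_of_nonneg_right hθG hGnn
      have hstep3 : (c₀ / (G+1)) * (G * a ^ (K+1)) ≤ c₀ * a ^ (K+1) := by
        rw [div_mul_eq_mul_div, div_le_iff₀ (by linarith : (0:ℝ) < G + 1)]
        nlinarith [hapow.le, hc₀.le, hG]
      calc θ * lam i0 * Esm K u lam = θ * (lam i0 * Esm K u lam) := by ring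
        _ ≤ c₀ * a ^ (K+1) := le_trans hstep1 (le_trans hstep2 hstep3)
        _ ≤ Esm (K+1) (Finset.univ.erase ik) lam := hW
  · -- Λ empty : only the easy case can occur
    refine ⟨1/2, by norm_num, ?_⟩
    intro lam hlam hanti
    have hlam' : ∀ m, 1 ≤ m → m ≤ K + 2 → 0 ≤ Esm m Finset.univ lam := hlam
    obtain ⟨hWid, hSA, hg, hx0⟩ := hkey lam hlam' hanti
    rw [ge_iff_le]
    show 1/2 * lam i0 * Esm K u lam ≤ Esm (K+1) (Finset.univ.erase ik) lam
    rcases le_or_gt (lam ik) (lam i0 / 2) with hsplit | hsplit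
    · nlinarith [mul_nonneg hx0 hg, mul_nonneg (sub_nonneg.2 hsplit) hg]
    · exfalso
      have hik0 : 0 < lam ik := by linarith
      set a : ℝ := lam ik with hadef
      set y : Fin n → ℝ := fun i => a⁻¹ * lam i with hydef
      apply hΛne
      refine ⟨y, ?_, ?_, ?_, ?_⟩
      · intro p q hpq
        exact mul_le_mul_of_nonneg_left (hanti hpq) (inv_nonneg.2 hik0.le)
      · intro m h1 h2
        rw [hydef, Esm_smul]
        exact mul_nonneg (by positivity) (hlam' m h1 h2)
      · rw [hydef]
        exact inv_mul_cancel₀ hik0.ne'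
      · rw [hydef]
        simp only []
        rw [inv_mul_le_iff₀ hik0]
        linarith
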